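/- Let f be a complex polynomial of exact degree n ≥ 1 with all zeros in the disk |z| ≤ 1, and let P be a complex polynomial of degree at most n with |P(z)| ≤ |f(z)| for all z with |z| = 1. Then for every complex number γ with |γ| > 1, every zero of the polynomial P(z) − γ·f(z) lies in the closed disk |z| ≤ 1. -/

import Mathlib

/-!
Invert the variable: with `n = deg f`, the reversed polynomials `q = reflect n P` and
`g = reflect n f` satisfy `|q| ≤ |g|` on the unit circle, and `g` has no zeros in the open unit
disc, so `|q| ≤ |g|` on the closed disc. Back in the original variable this says
`|P(z)| ≤ |f(z)|` for `|z| ≥ 1`, which is incompatible with `P(z) = γ f(z)`, `f(z) ≠ 0`,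
`|γ| > 1`.

The maximum principle applied to `q / g` needs `g` zero-free on the closed disc. A zero `μ` of
`g` on the circle is also a zero of `q` (as `|q(μ)| ≤ |g(μ)| = 0`), so the factor `X - μ` can be
cancelled from both; by continuity the bound on the circle survives, and we induct on `deg g`.
-/

open Polynomial Metric

lemma mem_closure_sphere_diff_singleton {E : Type*} [NormedAddCommGroup E] [NormedSpace ℝ E]
    (hE : 1 < Module.rank ℝ E) {c x : E} {r : ℝ} (hr : 0 < r) (hx : x ∈ sphere c r) :
    x ∈ closure (sphere c r \ {x}) := by
  have hnontriv : (sphere c r).Nontrivial := by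
    refine ⟨x, hx, (2 : ℝ) • c - x, ?_, ?_⟩
    · rw [mem_sphere, dist_eq_norm] at hx ⊢
      rw [← hx, ← norm_neg, two_smul]
      congr 1
      abel
    · intro h
      have h2 : (2 : ℝ) • (x - c) = 0 := by linear_combination (norm := module) h
      rw [smul_eq_zero, sub_eq_zero] at h2
      rw [h2.resolve_left two_ne_zero, mem_sphere, dist_self] at hx
      exact hr.ne hx
  have := (isPreconnected_sphere hE c r).preperfect_of_nontrivial hnontriv x hx
  rwa [accPt_principal_iff_clusterPt, ← mem_closure_iff_clusterPt] at this

lemma norm_le_norm_of_forall_mem_frontier {E : Type*} [NormedAddCommGroup E] [NormedSpace ℂ E]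
    [Nontrivial E] {U : Set E} (hU : Bornology.IsBounded U) {q g : E → ℂ}
    (hq : DiffContOnCl ℂ q U) (hg : DiffContOnCl ℂ g U) (hg₀ : ∀ z ∈ closure U, g z ≠ 0)
    (hqg : ∀ z ∈ frontier U, ‖q z‖ ≤ ‖g z‖) {z : E} (hz : z ∈ closure U) :
    ‖q z‖ ≤ ‖g z‖ := by
  have hdiv : ∀ w ∈ closure U, ‖(g⁻¹ * q) w‖ ≤ 1 ↔ ‖q w‖ ≤ ‖g w‖ := fun w hw => by
    rw [Pi.mul_apply, Pi.inv_apply, norm_mul, norm_inv,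
      inv_mul_le_one₀ (norm_pos_iff.2 (hg₀ w hw))]
  refine (hdiv z hz).1 (Complex.norm_le_of_forall_mem_frontier_norm_le hU
    ((hg.inv hg₀).smul hq) (fun w hw => (hdiv w ?_).2 (hqg w hw)) hz)
  exact frontier_subset_closure hw

lemma eval_reflect_inv_mul_pow {K : Type*} [Field K] {p : K[X]} {N : ℕ} (hp : p.natDegree ≤ N)
    {x : K} (hx : x ≠ 0) : (reflect N p).eval x⁻¹ * x ^ N = p.eval x := by
  let _ : Invertible x := invertibleOfNonzero hx
  simpa only [eval₂_id, invOf_eq_inv] using eval₂_reflect_mul_pow (RingHom.id K) x N p hp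

lemma norm_eval_le_on_sphere_of_mul_X_sub_C {q g : ℂ[X]} {μ : ℂ}
    (h : ∀ w : ℂ, ‖w‖ = 1 → ‖((X - C μ) * q).eval w‖ ≤ ‖((X - C μ) * g).eval w‖)
    {w : ℂ} (hw : ‖w‖ = 1) : ‖q.eval w‖ ≤ ‖g.eval w‖ := by
  have hoff : sphere (0 : ℂ) 1 \ {μ} ⊆ {w | ‖q.eval w‖ ≤ ‖g.eval w‖} := by
    rintro v ⟨hv, hvμ : v ≠ μ⟩
    rw [mem_sphere_zero_iff_norm] at hv
    have := h v hv
    simp only [eval_mul, eval_sub, eval_X, eval_C, norm_mul] at this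
    exact le_of_mul_le_mul_left this (norm_pos_iff.2 (sub_ne_zero.2 hvμ))
  have hclosed :=
    isClosed_le (continuous_norm.comp q.continuous) (continuous_norm.comp g.continuous)
  rcases eq_or_ne w μ with rfl | hwμ
  · refine closure_minimal hoff hclosed (mem_closure_sphere_diff_singleton (by simp) one_pos ?_)
    rwa [mem_sphere_zero_iff_norm]
  · exact hoff ⟨mem_sphere_zero_iff_norm.2 hw, hwμ⟩

theorem norm_eval_le_of_norm_le_one {q g : ℂ[X]} (hg : ∀ w : ℂ, g.eval w = 0 → 1 ≤ ‖w‖)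
    (hqg : ∀ w : ℂ, ‖w‖ = 1 → ‖q.eval w‖ ≤ ‖g.eval w‖) {w : ℂ} (hw : ‖w‖ ≤ 1) :
    ‖q.eval w‖ ≤ ‖g.eval w‖ := by
  by_cases hcirc : ∃ μ : ℂ, ‖μ‖ = 1 ∧ g.IsRoot μ
  · obtain ⟨μ, hμ, hgμ⟩ := hcirc
    have hqμ : q.IsRoot μ := by simpa [hgμ.eq_zero] using hqg μ hμ
    obtain ⟨g₁, rfl⟩ := dvd_iff_isRoot.2 hgμ
    obtain ⟨q₁, rfl⟩ := dvd_iff_isRoot.2 hqμ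
    have hg₁ : g₁ ≠ 0 := by
      rintro rfl
      have h0 := hg 0 (by simp)
      norm_num at h0
    have : g₁.natDegree < ((X - C μ) * g₁).natDegree := by
      rw [natDegree_mul (X_sub_C_ne_zero μ) hg₁, natDegree_X_sub_C]
      omega
    have hle := norm_eval_le_of_norm_le_one (q := q₁) (g := g₁)
      (fun v hv => hg v (by rw [eval_mul, hv, mul_zero]))
      (fun v hv => norm_eval_le_on_sphere_of_mul_X_sub_C hqg hv) hw
    simp only [eval_mul, norm_mul]
    exact mul_le_mul_of_nonneg_left hle (norm_nonneg _)
  · have hg₀ : ∀ v ∈ closure (ball (0 : ℂ) 1), g.eval v ≠ 0 := by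
      intro v hv hgv
      rw [closure_ball _ one_ne_zero, mem_closedBall_zero_iff] at hv
      exact hcirc ⟨v, le_antisymm hv (hg v hgv), hgv⟩
    refine norm_le_norm_of_forall_mem_frontier isBounded_ball q.differentiable.diffContOnCl
      g.differentiable.diffContOnCl hg₀ (fun v hv => hqg v ?_) ?_
    · rwa [frontier_ball _ one_ne_zero, mem_sphere_zero_iff_norm] at hv
    · rwa [closure_ball _ one_ne_zero, mem_closedBall_zero_iff]
termination_by g.natDegree

theorem norm_eval_le_of_one_le_norm {f P : ℂ[X]} (hf : ∀ z : ℂ, f.eval z = 0 → ‖z‖ ≤ 1)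
    (hP : P.natDegree ≤ f.natDegree) (hPf : ∀ z : ℂ, ‖z‖ = 1 → ‖P.eval z‖ ≤ ‖f.eval z‖)
    {z : ℂ} (hz : 1 ≤ ‖z‖) : ‖P.eval z‖ ≤ ‖f.eval z‖ := by
  set n := f.natDegree
  have hreflect : ∀ p : ℂ[X], p.natDegree ≤ n → ∀ x : ℂ, x ≠ 0 →
      ‖p.eval x‖ = ‖(reflect n p).eval x⁻¹‖ * ‖x‖ ^ n := fun p hp x hx => by
    rw [← eval_reflect_inv_mul_pow hp hx, norm_mul, norm_pow]
  have hf₀ : f ≠ 0 := by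
    rintro rfl
    have h2 := hf 2 eval_zero
    norm_num at h2
  have hg : ∀ w : ℂ, (reflect n f).eval w = 0 → 1 ≤ ‖w‖ := by
    intro w hw
    rcases eq_or_ne w 0 with rfl | hw₀
    · rw [← coeff_zero_eq_eval_zero, coeff_reflect, revAt_le (Nat.zero_le _), Nat.sub_zero] at hw
      exact absurd hw (leadingCoeff_ne_zero.2 hf₀)
    · have hfw := hreflect f le_rfl w⁻¹ (inv_ne_zero hw₀)
      rw [inv_inv, hw, norm_zero, zero_mul, norm_eq_zero] at hfw
      have := hf w⁻¹ hfw
      rw [norm_inv] at this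
      exact (inv_le_one₀ (norm_pos_iff.2 hw₀)).1 this
  have hqg : ∀ w : ℂ, ‖w‖ = 1 → ‖(reflect n P).eval w‖ ≤ ‖(reflect n f).eval w‖ := by
    intro w hw
    have hw₀ : w⁻¹ ≠ 0 := inv_ne_zero (norm_ne_zero_iff.1 (hw ▸ one_ne_zero))
    have := hPf w⁻¹ (by rw [norm_inv, hw, inv_one])
    rwa [hreflect P hP _ hw₀, hreflect f le_rfl _ hw₀, inv_inv, norm_inv, hw, inv_one, one_pow,
      mul_one, mul_one] at this
  have hz₀ : z ≠ 0 := norm_ne_zero_iff.1 (by linarith)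
  rw [hreflect P hP z hz₀, hreflect f le_rfl z hz₀]
  gcongr
  exact norm_eval_le_of_norm_le_one hg hqg (by rw [norm_inv]; exact inv_le_one_of_one_le₀ hz)

theorem zeros_of_P_sub_gamma_f_general
    (n : ℕ)
    (f : Polynomial ℂ) (hf : f.natDegree = n)
    (hfzeros : ∀ z : ℂ, f.eval z = 0 → ‖z‖ ≤ 1)
    (P : Polynomial ℂ) (hP : P.degree ≤ (n : ℕ))
    (hPf : ∀ z : ℂ, ‖z‖ = 1 → ‖P.eval z‖ ≤ ‖f.eval z‖) :
    ∀ γ : ℂ, 1 < ‖γ‖ →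
      ∀ z : ℂ, (P - Polynomial.C γ * f).eval z = 0 → ‖z‖ ≤ 1 := by
  intro γ hγ z hz
  by_contra! hz₁
  have hfz : 0 < ‖f.eval z‖ := norm_pos_iff.2 fun h => (hfzeros z h).not_gt hz₁
  have hPz : P.eval z = γ * f.eval z := by rwa [eval_sub, eval_mul, eval_C, sub_eq_zero] at hz
  have hle := norm_eval_le_of_one_le_norm hfzeros (hf ▸ natDegree_le_of_degree_le hP) hPf hz₁.le
  rw [hPz, norm_mul] at hle
  exact hle.not_gt (lt_mul_left hfz hγ)

theorem zeros_of_P_sub_gamma_f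
    (n : ℕ) (hn : 1 ≤ n)
    (f : Polynomial ℂ) (hf : f.natDegree = n)
    (hfzeros : ∀ z : ℂ, f.eval z = 0 → ‖z‖ ≤ 1)
    (P : Polynomial ℂ) (hP : P.degree ≤ (n : ℕ))
    (hPf : ∀ z : ℂ, ‖z‖ = 1 → ‖P.eval z‖ ≤ ‖f.eval z‖) :
    ∀ γ : ℂ, 1 < ‖γ‖ →
      ∀ z : ℂ, (P - Polynomial.C γ * f).eval z = 0 → ‖z‖ ≤ 1 :=
  zeros_of_P_sub_gamma_f_general n f hf hfzeros P hP hPf
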